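/- arXiv:1301.1707 — 2 statements merged into one kernel-verified Lean document; each statement's English description precedes it below -/
import Mathlib

section
/- Let c > 0 be a real number and n ≥ 0 an integer, and let β_k^{(n)} = ∫_{-1}^{1} ψ_n(x)·P_k(x)·√(k + 1/2) dx for k = 0, 1, 2, …. Define A_{k,k} = k(k+1) + c²·(2k(k+1) − 1)/((2k+3)(2k−1)) and A_{k,k+2} = A_{k+2,k} = c²·(k+2)(k+1)/((2k+3)·√((2k+1)(2k+5))). Then: A_{0,0}·β_0^{(n)} + A_{0,2}·β_2^{(n)} = χ_n·β_0^{(n)}; A_{1,1}·β_1^{(n)} + A_{1,3}·β_3^{(n)} = χ_n·β_1^{(n)}; and for every integer k ≥ 2, A_{k,k−2}·β_{k−2}^{(n)} + A_{k,k}·β_k^{(n)} + A_{k,k+2}·β_{k+2}^{(n)} = χ_n·β_k^{(n)}. -/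
open Real MeasureTheory Set

/-- A `k`-th prolate datum for band limit `c`: `ψ` is real-analytic with unit
`L²[-1,1]` norm, has exactly `k` zeros in `(-1,1)`, is an eigenfunction of the
prolate integral operator with nonzero eigenvalue `lam`, and satisfies the
prolate differential equation with eigenvalue `χ`. -/
structure ProlateDatum (c : ℝ) (k : ℕ) (ψ : ℝ → ℝ) (lam : ℂ) (χ : ℝ) : Prop where
  analytic : ∀ x : ℝ, AnalyticAt ℝ ψ x
  normalized : ∫ t in (-1:ℝ)..1, (ψ t)^2 = 1
  zeros_card : {x : ℝ | x ∈ Set.Ioo (-1:ℝ) 1 ∧ ψ x = 0}.encard = k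
  lam_ne_zero : lam ≠ 0
  integral_eig : ∀ x : ℝ,
    lam * (ψ x : ℂ) =
      ∫ t in (-1:ℝ)..1, (ψ t : ℂ) * Complex.exp (Complex.I * (c:ℂ) * (x:ℂ) * (t:ℂ))
  diff_eq : ∀ x : ℝ,
    (1 - x^2) * deriv (deriv ψ) x - 2*x * deriv ψ x + (χ - c^2 * x^2) * ψ x = 0

/-- The Legendre polynomials, via `P₀ = 1`, `P₁ = t`, and
`(k+1)·P_{k+1}(t) = (2k+1)·t·P_k(t) − k·P_{k−1}(t)`. -/
noncomputable def legendreP : ℕ → ℝ → ℝ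
  | 0, _ => 1
  | 1, t => t
  | (k+2), t => ((2*(k:ℝ)+3) * t * legendreP (k+1) t - ((k:ℝ)+1) * legendreP k t) / ((k:ℝ)+2)

/-- The Legendre functions of the second kind on `(-1,1)`, via
`Q₀(t) = (1/2)·log((1+t)/(1−t))`, `Q₁(t) = (t/2)·log((1+t)/(1−t)) − 1`, and
`(k+1)·Q_{k+1}(t) = (2k+1)·t·Q_k(t) − k·Q_{k−1}(t)`. -/
noncomputable def legendreQ : ℕ → ℝ → ℝ
  | 0, t => (1/2) * Real.log ((1+t)/(1-t))
  | 1, t => (t/2) * Real.log ((1+t)/(1-t)) - 1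
  | (k+2), t => ((2*(k:ℝ)+3) * t * legendreQ (k+1) t - ((k:ℝ)+1) * legendreQ k t) / ((k:ℝ)+2)

/-- The `k`-th Legendre coefficient `α_k = (k + 1/2)·∫_{-1}^1 ψ(x)·P_k(x) dx`. -/
noncomputable def legendreCoeff (ψ : ℝ → ℝ) (k : ℕ) : ℝ :=
  ((k:ℝ) + 1/2) * ∫ x in (-1:ℝ)..1, ψ x * legendreP k x

/-- The diagonal entries `A_{k,k}` of the tridiagonal matrix of the prolate
differential operator in the normalized Legendre basis. -/
noncomputable def prolateAdiag (c : ℝ) (k : ℕ) : ℝ :=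
  (k:ℝ)*((k:ℝ)+1) + c^2 * (2*(k:ℝ)*((k:ℝ)+1) - 1) / ((2*(k:ℝ)+3)*(2*(k:ℝ)-1))

/-- The off-diagonal entries `A_{k,k+2} = A_{k+2,k}`. -/
noncomputable def prolateAoff (c : ℝ) (k : ℕ) : ℝ :=
  c^2 * ((k:ℝ)+2)*((k:ℝ)+1) / ((2*(k:ℝ)+3) * Real.sqrt ((2*(k:ℝ)+1)*(2*(k:ℝ)+5)))


section ProlateAux
open Polynomial

/-- Polynomial version of the Legendre recurrence. -/
noncomputable def auxLP : ℕ → Polynomial ℝ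
  | 0 => 1
  | 1 => X
  | (k+2) => C (((k:ℝ)+2)⁻¹) * (C (2*(k:ℝ)+3) * X * auxLP (k+1) - C ((k:ℝ)+1) * auxLP k)

lemma auxLP_eval (k : ℕ) (x : ℝ) : (auxLP k).eval x = legendreP k x := by
  induction k using Nat.twoStepInduction with
  | zero => simp [auxLP, legendreP]
  | one => simp [auxLP, legendreP]
  | more k ih1 ih2 =>
    simp only [auxLP, legendreP, eval_mul, eval_sub, eval_C, eval_X, ih1, ih2]
    have h : ((k:ℝ)+2) ≠ 0 := by positivity
    field_simp

lemma auxLP_rec (k : ℕ) :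
    C ((k:ℝ)+2) * auxLP (k+2) = C (2*(k:ℝ)+3) * X * auxLP (k+1) - C ((k:ℝ)+1) * auxLP k := by
  have h : ((k:ℝ)+2) ≠ 0 := by positivity
  rw [show auxLP (k+2)
      = C (((k:ℝ)+2)⁻¹) * (C (2*(k:ℝ)+3) * X * auxLP (k+1) - C ((k:ℝ)+1) * auxLP k) from rfl]
  rw [← mul_assoc, ← C_mul, mul_inv_cancel₀ h, C_1, one_mul]

lemma auxLP_J (k : ℕ) :
    derivative (auxLP (k+1)) = X * derivative (auxLP k) + C ((k:ℝ)+1) * auxLP k ∧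
    X * derivative (auxLP (k+1)) = derivative (auxLP k) + C ((k:ℝ)+1) * auxLP (k+1) := by
  induction k with
  | zero =>
    constructor <;> simp [auxLP]
  | succ k ih =>
    obtain ⟨i1, i4⟩ := ih
    have hrec := auxLP_rec k
    have hd := congrArg derivative hrec
    simp only [derivative_mul, derivative_C, derivative_X, zero_mul, zero_add, mul_one,
      derivative_sub] at hd
    have hC : (C ((k:ℝ)+2) : Polynomial ℝ) ≠ 0 := by
      simp only [ne_eq, C_eq_zero]; positivity
    simp only [Nat.cast_add, Nat.cast_one]
    simp only [C_add, C_mul, C_1, map_ofNat] at hrec hd i1 i4 ⊢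
    have hC' : ((C (k:ℝ) : Polynomial ℝ) + 2) ≠ 0 := by
      simpa only [C_add, map_ofNat] using hC
    have i1' : derivative (auxLP (k+2))
        = X * derivative (auxLP (k+1)) + (C ((k:ℝ)) + 1 + 1) * auxLP (k+1) := by
      apply mul_left_cancel₀ hC'
      linear_combination hd + ((C (k:ℝ) : Polynomial ℝ) + 1) * i4
    refine ⟨by linear_combination i1', ?_⟩
    apply mul_left_cancel₀ hC'
    linear_combination ((C (k:ℝ)+2)*X) * i1' + ((C (k:ℝ)+2)*X) * i4 - (C (k:ℝ)+2) * i1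
      - (C (k:ℝ)+2) * hrec

lemma auxLP_ode (k : ℕ) :
    (1 - X^2) * derivative (derivative (auxLP k)) - 2 * X * derivative (auxLP k)
      + C ((k:ℝ)*((k:ℝ)+1)) * auxLP k = 0 := by
  cases k with
  | zero => simp [auxLP]
  | succ k =>
    obtain ⟨i1, i4⟩ := auxLP_J k
    have hI3 : (1 - X^2) * derivative (auxLP (k+1))
        = C ((k:ℝ)+1) * (auxLP k - X * auxLP (k+1)) := by
      linear_combination i1 - X * i4
    have hd := congrArg derivative hI3
    simp only [derivative_mul, derivative_sub, derivative_one, derivative_C, derivative_X,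
      derivative_pow, zero_mul, zero_add, mul_one, zero_sub, pow_one, Nat.cast_ofNat] at hd
    simp only [Nat.cast_add, Nat.cast_one]
    simp only [C_add, C_mul, C_1, map_ofNat] at hd i1 i4 ⊢
    linear_combination hd - ((C (k:ℝ) : Polynomial ℝ) + 1) * i4

lemma auxLP_ode_eval (k : ℕ) (x : ℝ) :
    (1 - x^2) * ((auxLP k).derivative.derivative).eval x - 2*x*((auxLP k).derivative).eval x
      + (k:ℝ)*((k:ℝ)+1) * (auxLP k).eval x = 0 := by
  have := congrArg (Polynomial.eval x) (auxLP_ode k)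
  simp only [eval_add, eval_sub, eval_mul, eval_pow, eval_one, eval_X, eval_C, eval_zero,
    eval_ofNat] at this
  linear_combination this

lemma legendreP_cont (k : ℕ) : Continuous (legendreP k) := by
  have := (auxLP k).continuous
  simpa only [auxLP_eval] using this

lemma prolate_key (c χ : ℝ) (ψ : ℝ → ℝ) (hψa : ∀ x, AnalyticAt ℝ ψ x)
    (hde : ∀ x : ℝ, (1 - x^2) * deriv (deriv ψ) x - 2*x * deriv ψ x + (χ - c^2 * x^2) * ψ x = 0)
    (k : ℕ) :
    χ * ∫ x in (-1:ℝ)..1, ψ x * legendreP k x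
      = (k:ℝ)*((k:ℝ)+1) * (∫ x in (-1:ℝ)..1, ψ x * legendreP k x)
        + c^2 * ∫ x in (-1:ℝ)..1, x^2 * (ψ x * legendreP k x) := by
  have hC : ContDiff ℝ (⊤:ℕ∞) ψ := contDiff_iff_contDiffAt.mpr fun x => (hψa x).contDiffAt
  obtain ⟨hd1, hC1⟩ := contDiff_infty_iff_deriv.mp hC
  obtain ⟨hd2, hC2⟩ := contDiff_infty_iff_deriv.mp hC1
  have hc0 : Continuous ψ := hC.continuous
  have hc1 : Continuous (deriv ψ) := hC1.continuous
  have hc2 : Continuous (deriv (deriv ψ)) := hC2.continuous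
  have hcP : Continuous (fun x : ℝ => (auxLP k).eval x) := (auxLP k).continuous
  have hcP' : Continuous (fun x : ℝ => ((auxLP k).derivative).eval x) :=
    ((auxLP k).derivative).continuous
  have hcP'' : Continuous (fun x : ℝ => ((auxLP k).derivative.derivative).eval x) :=
    ((auxLP k).derivative.derivative).continuous
  simp only [← auxLP_eval]
  set E : ℝ → ℝ := fun x => ((1 - x^2) * deriv (deriv ψ) x - 2*x*deriv ψ x) * (auxLP k).eval x
      - ψ x * ((1-x^2) * ((auxLP k).derivative.derivative).eval x
        - 2*x*((auxLP k).derivative).eval x) with hE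
  have hu : ∀ x ∈ Set.uIcc (-1:ℝ) 1,
      HasDerivAt (fun x => (1 - x^2) * (deriv ψ x * (auxLP k).eval x
        - ψ x * ((auxLP k).derivative).eval x)) (E x) x := by
    intro x _
    have h1 : HasDerivAt ψ (deriv ψ x) x := (hd1 x).hasDerivAt
    have h2 : HasDerivAt (deriv ψ) (deriv (deriv ψ) x) x := (hd2 x).hasDerivAt
    have hp : HasDerivAt (fun y : ℝ => (auxLP k).eval y) (((auxLP k).derivative).eval x) x :=
      (auxLP k).hasDerivAt x
    have hp' : HasDerivAt (fun y : ℝ => ((auxLP k).derivative).eval y)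
        (((auxLP k).derivative.derivative).eval x) x := ((auxLP k).derivative).hasDerivAt x
    have hq : HasDerivAt (fun y : ℝ => 1 - y^2) (-(2*x)) x := by
      simpa using ((hasDerivAt_pow 2 x).const_sub 1)
    have := hq.mul ((h2.mul hp).sub (h1.mul hp'))
    refine this.congr_deriv ?_
    simp only [hE, Pi.mul_apply, Pi.sub_apply]
    ring
  have hEcont : Continuous E := by
    rw [hE]; fun_prop
  have hzero : ∫ x in (-1:ℝ)..1, E x = 0 := by
    rw [intervalIntegral.integral_eq_sub_of_hasDerivAt hu (hEcont.intervalIntegrable _ _)]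
    norm_num
  have hptE : ∀ x : ℝ, E x = c^2 * (x^2 * (ψ x * (auxLP k).eval x))
      + ((k:ℝ)*((k:ℝ)+1) - χ) * (ψ x * (auxLP k).eval x) := by
    intro x
    simp only [hE]
    linear_combination ((auxLP k).eval x)*(hde x) - (ψ x) * (auxLP_ode_eval k x)
  have hsplit : ∫ x in (-1:ℝ)..1, E x
      = c^2 * (∫ x in (-1:ℝ)..1, x^2 * (ψ x * (auxLP k).eval x))
        + ((k:ℝ)*((k:ℝ)+1) - χ) * ∫ x in (-1:ℝ)..1, ψ x * (auxLP k).eval x := by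
    rw [intervalIntegral.integral_congr (g := fun x => c^2 * (x^2 * (ψ x * (auxLP k).eval x))
      + ((k:ℝ)*((k:ℝ)+1) - χ) * (ψ x * (auxLP k).eval x)) (fun x _ => hptE x)]
    rw [intervalIntegral.integral_add ((by fun_prop : Continuous fun x : ℝ =>
        c^2 * (x^2 * (ψ x * (auxLP k).eval x))).intervalIntegrable _ _)
      ((by fun_prop : Continuous fun x : ℝ =>
        ((k:ℝ)*((k:ℝ)+1) - χ) * (ψ x * (auxLP k).eval x)).intervalIntegrable _ _),
      intervalIntegral.integral_const_mul, intervalIntegral.integral_const_mul]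
  rw [hsplit] at hzero
  linarith

lemma aux_int_three (ψ f g h : ℝ → ℝ) (hψ : Continuous ψ) (hf : Continuous f)
    (hg : Continuous g) (hh : Continuous h) (D a b d : ℝ)
    (hpt : ∀ x : ℝ, D * (x^2 * (ψ x * f x))
      = a * (ψ x * g x) + b * (ψ x * f x) + d * (ψ x * h x)) :
    D * ∫ x in (-1:ℝ)..1, x^2 * (ψ x * f x)
      = a * (∫ x in (-1:ℝ)..1, ψ x * g x) + b * (∫ x in (-1:ℝ)..1, ψ x * f x)
        + d * ∫ x in (-1:ℝ)..1, ψ x * h x := by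
  rw [← intervalIntegral.integral_const_mul]
  rw [intervalIntegral.integral_congr
    (g := fun x => a*(ψ x*g x)+b*(ψ x*f x)+d*(ψ x*h x)) (fun x _ => hpt x)]
  rw [intervalIntegral.integral_add
      ((by fun_prop : Continuous fun x : ℝ => a*(ψ x*g x)+b*(ψ x*f x)).intervalIntegrable _ _)
      ((by fun_prop : Continuous fun x : ℝ => d*(ψ x*h x)).intervalIntegrable _ _),
    intervalIntegral.integral_add
      ((by fun_prop : Continuous fun x : ℝ => a*(ψ x*g x)).intervalIntegrable _ _)
      ((by fun_prop : Continuous fun x : ℝ => b*(ψ x*f x)).intervalIntegrable _ _),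
    intervalIntegral.integral_const_mul, intervalIntegral.integral_const_mul,
    intervalIntegral.integral_const_mul]

lemma legendreP_three (j : ℕ) (x : ℝ) :
    ((j:ℝ)+2) * legendreP (j+2) x
      = (2*(j:ℝ)+3)*x*legendreP (j+1) x - ((j:ℝ)+1)*legendreP j x := by
  rw [legendreP]
  field_simp

lemma aux_exp0 (x : ℝ) : 3 * (x^2 * legendreP 0 x)
    = 2 * legendreP 2 x + 1 * legendreP 0 x + 0 * legendreP 0 x := by
  have h := legendreP_three 0 x
  rw [show (0:ℕ)+2 = 2 from rfl, show (0:ℕ)+1 = 1 from rfl] at h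
  have h1 : legendreP 1 x = x := rfl
  have h0 : legendreP 0 x = 1 := rfl
  rw [h1, h0] at h
  rw [h0]
  push_cast at h
  linear_combination (-1) * h

lemma aux_exp1 (x : ℝ) : 5 * (x^2 * legendreP 1 x)
    = 2 * legendreP 3 x + 3 * legendreP 1 x + 0 * legendreP 1 x := by
  have h := legendreP_three 0 x
  have h2 := legendreP_three 1 x
  rw [show (0:ℕ)+2 = 2 from rfl, show (0:ℕ)+1 = 1 from rfl] at h
  rw [show (1:ℕ)+2 = 3 from rfl, show (1:ℕ)+1 = 2 from rfl] at h2
  have h1 : legendreP 1 x = x := rfl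
  have h0 : legendreP 0 x = 1 := rfl
  rw [h1, h0] at h
  rw [h1] at h2 ⊢
  push_cast at h h2
  norm_num at h
  linear_combination (-2/3)*h2 + (-5*x/3)*h

lemma aux_expm (m : ℕ) (x : ℝ) :
    ((2*(m:ℝ)+3)*(2*(m:ℝ)+5)*(2*(m:ℝ)+7)) * (x^2 * legendreP (m+2) x)
      = ((m:ℝ)+3)*((m:ℝ)+4)*(2*(m:ℝ)+3) * legendreP (m+4) x
        + (2*((m:ℝ)+2)*((m:ℝ)+3)-1)*(2*(m:ℝ)+5) * legendreP (m+2) x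
        + ((m:ℝ)+1)*((m:ℝ)+2)*(2*(m:ℝ)+7) * legendreP m x := by
  have r0 := legendreP_three m x
  have r1 := legendreP_three (m+1) x
  have r2 := legendreP_three (m+2) x
  rw [show m+1+2 = m+3 from rfl, show m+1+1 = m+2 from rfl] at r1
  rw [show m+2+2 = m+4 from rfl, show m+2+1 = m+3 from rfl] at r2
  push_cast at r1 r2
  linear_combination (-(2*(m:ℝ)+3)*(2*(m:ℝ)+7)*x) * r1 + (-(2*(m:ℝ)+3)*((m:ℝ)+3)) * r2
    + (-(2*(m:ℝ)+7)*((m:ℝ)+2)) * r0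

lemma aux_sqrt_prod (t : ℝ) (ht : 0 ≤ t) :
    Real.sqrt ((2*t+1)*(2*t+5)) = 2 * Real.sqrt (t+1/2) * Real.sqrt (t+2+1/2) := by
  have h1 : Real.sqrt (t+1/2)^2 = t+1/2 := Real.sq_sqrt (by linarith)
  have h2 : Real.sqrt (t+2+1/2)^2 = t+2+1/2 := Real.sq_sqrt (by linarith)
  rw [show (2*t+1)*(2*t+5) = (2*Real.sqrt (t+1/2)*Real.sqrt (t+2+1/2))^2 by
    rw [mul_pow, mul_pow, h1, h2]; ring]
  exact Real.sqrt_sq (by positivity)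

end ProlateAux

theorem beta_tridiagonal_recurrence
    (c : ℝ) (hc : 0 < c)
    (n : ℕ)
    (ψn : ℝ → ℝ) (lamn : ℂ) (χn : ℝ)
    (hnd : ProlateDatum c n ψn lamn χn)
    (β : ℕ → ℝ)
    (hβ : ∀ k, β k = ∫ x in (-1:ℝ)..1, ψn x * legendreP k x * Real.sqrt ((k:ℝ) + 1/2)) :
    prolateAdiag c 0 * β 0 + prolateAoff c 0 * β 2 = χn * β 0 ∧
    prolateAdiag c 1 * β 1 + prolateAoff c 1 * β 3 = χn * β 1 ∧
    (∀ k : ℕ, 2 ≤ k →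
      prolateAoff c (k-2) * β (k-2) + prolateAdiag c k * β k + prolateAoff c k * β (k+2)
        = χn * β k) := by
  have hβγ : ∀ k : ℕ, β k = Real.sqrt ((k:ℝ)+1/2) * (∫ x in (-1:ℝ)..1, ψn x * legendreP k x) := by
    intro k
    rw [hβ k, intervalIntegral.integral_mul_const, mul_comm]
  have hcψ : Continuous ψn :=
    (contDiff_iff_contDiffAt.mpr fun x => ((hnd.analytic x).contDiffAt) :
      ContDiff ℝ (⊤:ℕ∞) ψn).continuous
  have key : ∀ k : ℕ, χn * (∫ x in (-1:ℝ)..1, ψn x * legendreP k x)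
      = (k:ℝ)*((k:ℝ)+1) * (∫ x in (-1:ℝ)..1, ψn x * legendreP k x)
        + c^2 * ∫ x in (-1:ℝ)..1, x^2 * (ψn x * legendreP k x) :=
    fun k => prolate_key c χn ψn hnd.analytic hnd.diff_eq k
  refine ⟨?_, ?_, ?_⟩
  · -- k = 0
    have hk := key 0
    have hI := aux_int_three ψn (legendreP 0) (legendreP 2) (legendreP 0) hcψ
      (legendreP_cont 0) (legendreP_cont 2) (legendreP_cont 0) 3 2 1 0
      (fun x => by linear_combination (ψn x) * aux_exp0 x)
    rw [hβγ 0, hβγ 2]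
    simp only [prolateAdiag, prolateAoff]
    push_cast at hk ⊢
    rw [show Real.sqrt ((2:ℝ)+1/2) = Real.sqrt ((0:ℝ)+2+1/2) by norm_num,
      aux_sqrt_prod (0:ℝ) le_rfl]
    have hS0 : Real.sqrt ((0:ℝ)+1/2)^2 = (0:ℝ)+1/2 := Real.sq_sqrt (by norm_num)
    have e2 : ((0:ℝ)*((0:ℝ)+1) + c^2*(2*0*((0:ℝ)+1)-1)/((2*0+3)*(2*0-1)))
          * (Real.sqrt ((0:ℝ)+1/2) * ∫ x in (-1:ℝ)..1, ψn x * legendreP 0 x)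
        = c^2/3*(Real.sqrt ((0:ℝ)+1/2) * ∫ x in (-1:ℝ)..1, ψn x * legendreP 0 x) := by
      norm_num
    have e4 : c^2*((0:ℝ)+2)*((0:ℝ)+1)
          /((2*0+3)*(2*Real.sqrt ((0:ℝ)+1/2)*Real.sqrt ((0:ℝ)+2+1/2)))
          * (Real.sqrt ((0:ℝ)+2+1/2) * ∫ x in (-1:ℝ)..1, ψn x * legendreP 2 x)
        = c^2*Real.sqrt ((0:ℝ)+1/2)*(2*∫ x in (-1:ℝ)..1, ψn x * legendreP 2 x)/3 := by
      rw [div_mul_eq_mul_div, div_eq_div_iff (by positivity) (by positivity)]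
      linear_combination (-(12*c^2*(∫ x in (-1:ℝ)..1, ψn x * legendreP 2 x)
        * Real.sqrt ((0:ℝ)+2+1/2))) * hS0
    linear_combination e2 + e4 - (Real.sqrt ((0:ℝ)+1/2))*hk
      - (c^2*Real.sqrt ((0:ℝ)+1/2)/3)*hI
  · -- k = 1
    have hk := key 1
    have hI := aux_int_three ψn (legendreP 1) (legendreP 3) (legendreP 1) hcψ
      (legendreP_cont 1) (legendreP_cont 3) (legendreP_cont 1) 5 2 3 0
      (fun x => by linear_combination (ψn x) * aux_exp1 x)
    rw [hβγ 1, hβγ 3]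
    simp only [prolateAdiag, prolateAoff]
    push_cast at hk ⊢
    rw [show Real.sqrt ((3:ℝ)+1/2) = Real.sqrt ((1:ℝ)+2+1/2) by norm_num,
      aux_sqrt_prod (1:ℝ) zero_le_one]
    have hS1 : Real.sqrt ((1:ℝ)+1/2)^2 = (1:ℝ)+1/2 := Real.sq_sqrt (by norm_num)
    have e2 : ((1:ℝ)*((1:ℝ)+1) + c^2*(2*1*((1:ℝ)+1)-1)/((2*1+3)*(2*1-1)))
          * (Real.sqrt ((1:ℝ)+1/2) * ∫ x in (-1:ℝ)..1, ψn x * legendreP 1 x)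
        = (2 + c^2*3/5)*(Real.sqrt ((1:ℝ)+1/2) * ∫ x in (-1:ℝ)..1, ψn x * legendreP 1 x) := by
      norm_num
    have e4 : c^2*((1:ℝ)+2)*((1:ℝ)+1)
          /((2*1+3)*(2*Real.sqrt ((1:ℝ)+1/2)*Real.sqrt ((1:ℝ)+2+1/2)))
          * (Real.sqrt ((1:ℝ)+2+1/2) * ∫ x in (-1:ℝ)..1, ψn x * legendreP 3 x)
        = c^2*Real.sqrt ((1:ℝ)+1/2)*(2*∫ x in (-1:ℝ)..1, ψn x * legendreP 3 x)/5 := by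
      rw [div_mul_eq_mul_div, div_eq_div_iff (by positivity) (by positivity)]
      linear_combination (-(20*c^2*(∫ x in (-1:ℝ)..1, ψn x * legendreP 3 x)
        * Real.sqrt ((1:ℝ)+2+1/2))) * hS1
    linear_combination e2 + e4 - (Real.sqrt ((1:ℝ)+1/2))*hk
      - (c^2*Real.sqrt ((1:ℝ)+1/2)/5)*hI
  · -- k ≥ 2
    intro k hk2
    obtain ⟨m, rfl⟩ : ∃ m, k = m + 2 := ⟨k - 2, by omega⟩
    simp only [Nat.add_sub_cancel]
    rw [show m+2+2 = m+4 from rfl]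
    have hk := key (m+2)
    have hI := aux_int_three ψn (legendreP (m+2)) (legendreP (m+4)) (legendreP m) hcψ
      (legendreP_cont (m+2)) (legendreP_cont (m+4)) (legendreP_cont m)
      ((2*(m:ℝ)+3)*(2*(m:ℝ)+5)*(2*(m:ℝ)+7))
      (((m:ℝ)+3)*((m:ℝ)+4)*(2*(m:ℝ)+3))
      ((2*((m:ℝ)+2)*((m:ℝ)+3)-1)*(2*(m:ℝ)+5))
      (((m:ℝ)+1)*((m:ℝ)+2)*(2*(m:ℝ)+7))
      (fun x => by linear_combination (ψn x) * aux_expm m x)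
    rw [hβγ m, hβγ (m+2), hβγ (m+4)]
    simp only [prolateAdiag, prolateAoff]
    push_cast at hk ⊢
    rw [aux_sqrt_prod ((m:ℝ)) (by positivity), aux_sqrt_prod ((m:ℝ)+2) (by positivity),
      show Real.sqrt ((m:ℝ)+2+2+1/2) = Real.sqrt ((m:ℝ)+4+1/2) by
        rw [show (m:ℝ)+2+2+1/2 = (m:ℝ)+4+1/2 by ring]]
    have hS2 : Real.sqrt ((m:ℝ)+2+1/2)^2 = (m:ℝ)+2+1/2 := Real.sq_sqrt (by positivity)
    set S0 := Real.sqrt ((m:ℝ)+1/2) with hS0def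
    set S2 := Real.sqrt ((m:ℝ)+2+1/2) with hS2def
    set S4 := Real.sqrt ((m:ℝ)+4+1/2) with hS4def
    have hS0p : 0 < S0 := Real.sqrt_pos.mpr (by positivity)
    have hS2p : 0 < S2 := Real.sqrt_pos.mpr (by positivity)
    have hS4p : 0 < S4 := Real.sqrt_pos.mpr (by positivity)
    set g0 := ∫ x in (-1:ℝ)..1, ψn x * legendreP m x with hg0
    set g2 := ∫ x in (-1:ℝ)..1, ψn x * legendreP (m+2) x with hg2
    set g4 := ∫ x in (-1:ℝ)..1, ψn x * legendreP (m+4) x with hg4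
    set I := ∫ x in (-1:ℝ)..1, x^2 * (ψn x * legendreP (m+2) x) with hIdef
    have hD : ((2*(m:ℝ)+3)*(2*(m:ℝ)+5)*(2*(m:ℝ)+7)) ≠ 0 := by positivity
    have hI2 : I = (((m:ℝ)+3)*((m:ℝ)+4)*(2*(m:ℝ)+3) * g4
        + (2*((m:ℝ)+2)*((m:ℝ)+3)-1)*(2*(m:ℝ)+5) * g2
        + ((m:ℝ)+1)*((m:ℝ)+2)*(2*(m:ℝ)+7) * g0) / ((2*(m:ℝ)+3)*(2*(m:ℝ)+5)*(2*(m:ℝ)+7)) := by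
      rw [eq_div_iff hD]; linear_combination hI
    have h_0 : c^2*((m:ℝ)+2)*((m:ℝ)+1)/((2*(m:ℝ)+3)*(2*S0*S2)) * (S0*g0)
        = c^2*S2*(((m:ℝ)+1)*((m:ℝ)+2)*(2*(m:ℝ)+7)*g0)
          / ((2*(m:ℝ)+3)*(2*(m:ℝ)+5)*(2*(m:ℝ)+7)) := by
      rw [div_mul_eq_mul_div, div_eq_div_iff (by positivity) (by positivity)]
      linear_combination (-(c^2*((m:ℝ)+2)*((m:ℝ)+1)*g0*(2*(m:ℝ)+3)*(2*(m:ℝ)+7)*2*S0)) * hS2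
    have h_2 : (((m:ℝ)+2)*(((m:ℝ)+2)+1)
          + c^2*(2*((m:ℝ)+2)*(((m:ℝ)+2)+1)-1)/((2*((m:ℝ)+2)+3)*(2*((m:ℝ)+2)-1))) * (S2*g2)
        = ((m:ℝ)+2)*((m:ℝ)+3)*(S2*g2)
          + S2*(c^2*((2*((m:ℝ)+2)*((m:ℝ)+3)-1)*(2*(m:ℝ)+5))*g2)
            / ((2*(m:ℝ)+3)*(2*(m:ℝ)+5)*(2*(m:ℝ)+7)) := by
      have h9 : (2*((m:ℝ)+2)+3) ≠ 0 := by positivity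
      have h3b : (2*((m:ℝ)+2)-1) ≠ 0 := by
        have hm : (0:ℝ) ≤ (m:ℝ) := Nat.cast_nonneg m
        intro h; linarith [h]
      field_simp
      ring
    have h_4 : c^2*(((m:ℝ)+2)+2)*(((m:ℝ)+2)+1)/((2*((m:ℝ)+2)+3)*(2*S2*S4)) * (S4*g4)
        = c^2*S2*(((m:ℝ)+3)*((m:ℝ)+4)*(2*(m:ℝ)+3)*g4)
          / ((2*(m:ℝ)+3)*(2*(m:ℝ)+5)*(2*(m:ℝ)+7)) := by
      rw [div_mul_eq_mul_div, div_eq_div_iff (by positivity) (by positivity)]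
      linear_combination (-(c^2*((m:ℝ)+4)*((m:ℝ)+3)*g4*(2*(m:ℝ)+3)*(2*(m:ℝ)+7)*2*S4)) * hS2
    linear_combination h_0 + h_2 + h_4 + (-S2)*hk - c^2*S2*hI2
end

section
/- Let c > 0 be a real number and n ≥ 0 an integer, and let β_0^{(n)} = (1/√2)·∫_{-1}^{1} ψ_n(x) dx and β_1^{(n)} = √(3/2)·∫_{-1}^{1} x·ψ_n(x) dx. If n is even, then ψ_n(0) ≠ 0 and λ_n = √2·β_0^{(n)}/ψ_n(0). If n is odd, then ψ_n'(0) ≠ 0 and λ_n = i·c·√(2/3)·β_1^{(n)}/ψ_n'(0). -/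
open Real MeasureTheory Set

section AuxLemmas

lemma aux_even_ncard_iff {S : Set ℝ} (hfin : S.Finite) (hsym : ∀ x ∈ S, -x ∈ S) :
    Even S.ncard ↔ 0 ∉ S := by
  classical
  set A := S ∩ Ioi (0:ℝ) with hA
  set B := S ∩ Iio (0:ℝ) with hB
  have hBim : B = Neg.neg '' A := by
    ext x
    simp only [hA, hB, mem_inter_iff, mem_Ioi, mem_Iio, mem_image]
    constructor
    · rintro ⟨hxS, hx⟩
      exact ⟨-x, ⟨hsym x hxS, by linarith⟩, by ring⟩
    · rintro ⟨y, ⟨hyS, hy⟩, rfl⟩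
      exact ⟨hsym y hyS, by linarith⟩
  have hAfin : A.Finite := hfin.inter_of_left _
  have hBfin : B.Finite := hfin.inter_of_left _
  have hcard : B.ncard = A.ncard := by
    rw [hBim]; exact Set.ncard_image_of_injective _ neg_injective
  have hdisj : Disjoint A B := by
    apply Set.disjoint_left.mpr
    rintro x ⟨-, hx1⟩ ⟨-, hx2⟩
    exact absurd hx1 (by simp at hx2 ⊢; linarith)
  by_cases h0 : (0:ℝ) ∈ S
  · have hS : S = insert 0 (A ∪ B) := by
      ext x
      simp only [mem_insert_iff, mem_union, hA, hB, mem_inter_iff, mem_Ioi, mem_Iio]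
      constructor
      · intro hx
        rcases lt_trichotomy x 0 with h | h | h
        · exact Or.inr (Or.inr ⟨hx, h⟩)
        · exact Or.inl h
        · exact Or.inr (Or.inl ⟨hx, h⟩)
      · rintro (rfl | ⟨h, -⟩ | ⟨h, -⟩) <;> assumption
    have h0AB : (0:ℝ) ∉ A ∪ B := by
      rintro (⟨-, h⟩ | ⟨-, h⟩) <;> simp at h
    rw [hS, Set.ncard_insert_of_notMem h0AB (hAfin.union hBfin),
      Set.ncard_union_eq hdisj hAfin hBfin, hcard]
    constructor
    · rintro ⟨m, hm⟩ -; omega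
    · intro h; exact absurd (mem_insert _ _) h
  · have hS : S = A ∪ B := by
      ext x
      simp only [mem_union, hA, hB, mem_inter_iff, mem_Ioi, mem_Iio]
      constructor
      · intro hx
        rcases lt_trichotomy x 0 with h | h | h
        · exact Or.inr ⟨hx, h⟩
        · exact absurd (h ▸ hx) h0
        · exact Or.inl ⟨hx, h⟩
      · rintro (⟨h, -⟩ | ⟨h, -⟩) <;> assumption
    rw [hS, Set.ncard_union_eq hdisj hAfin hBfin, hcard]
    simp only [← two_mul, even_two_mul, true_iff]
    exact hS ▸ h0


lemma aux_ode_zero (c χ : ℝ) (ψ : ℝ → ℝ)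
    (han : ∀ x, AnalyticAt ℝ ψ x)
    (hde : ∀ x : ℝ, (1 - x^2) * deriv (deriv ψ) x - 2*x * deriv ψ x + (χ - c^2 * x^2) * ψ x = 0)
    (h0 : ψ 0 = 0) (h0' : deriv ψ 0 = 0) : ∀ x, ψ x = 0 := by
  have hψan : AnalyticOnNhd ℝ ψ univ := fun x _ => han x
  have hdan : AnalyticOnNhd ℝ (deriv ψ) univ := hψan.deriv
  set proj : ℝ → ℝ := fun t => max (-2⁻¹) (min t 2⁻¹) with hprojdef
  have hproj : ∀ t, |proj t| ≤ 2⁻¹ := by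
    intro t
    rw [abs_le]
    exact ⟨le_max_left _ _, max_le (by norm_num) (min_le_right _ _)⟩
  have hden : ∀ t, (3:ℝ)/4 ≤ 1 - (proj t)^2 := by
    intro t
    have h := abs_le.mp (hproj t)
    nlinarith [h.1, h.2]
  set v : ℝ → ℝ × ℝ → ℝ × ℝ := fun t p =>
    (p.2, (2*(proj t)*p.2 - (χ - c^2*(proj t)^2)*p.1)/(1-(proj t)^2)) with hvdef
  set K : NNReal := ⟨4/3*(1+|χ|+c^2)+1, by positivity⟩ with hKdef
  have hKval : (K:ℝ) = 4/3*(1+|χ|+c^2)+1 := rfl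
  have hK1 : (1:ℝ) ≤ (K:ℝ) := by rw [hKval]; nlinarith [abs_nonneg χ, sq_nonneg c]
  have hv : ∀ t, LipschitzOnWith K (v t) ((fun _ => univ) t) := by
    intro t
    apply LipschitzWith.lipschitzOnWith
    apply LipschitzWith.of_dist_le_mul
    intro p q
    rw [Prod.dist_eq]
    apply max_le
    · calc dist p.2 q.2 ≤ dist p q := by rw [Prod.dist_eq]; exact le_max_right _ _
        _ ≤ K * dist p q := le_mul_of_one_le_left dist_nonneg hK1
    · rw [Real.dist_eq, hvdef]
      dsimp only
      rw [div_sub_div_same]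
      set a := proj t
      have ha := abs_le.mp (hproj t)
      have hd := hden t
      have h1 : |p.1 - q.1| ≤ dist p q := by
        rw [← Real.dist_eq, Prod.dist_eq]; exact le_max_left _ _
      have h2 : |p.2 - q.2| ≤ dist p q := by
        rw [← Real.dist_eq, Prod.dist_eq]; exact le_max_right _ _
      have key : |2*a*p.2 - (χ - c^2*a^2)*p.1 - (2*a*q.2 - (χ - c^2*a^2)*q.1)|
          ≤ |2*a| * |p.2 - q.2| + |χ - c^2*a^2| * |p.1 - q.1| := by
        have e : 2*a*p.2 - (χ - c^2*a^2)*p.1 - (2*a*q.2 - (χ - c^2*a^2)*q.1)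
            = 2*a*(p.2 - q.2) - (χ - c^2*a^2)*(p.1 - q.1) := by ring
        rw [e]
        calc |2*a*(p.2 - q.2) - (χ - c^2*a^2)*(p.1 - q.1)|
            ≤ |2*a*(p.2 - q.2)| + |(χ - c^2*a^2)*(p.1 - q.1)| := abs_sub _ _
          _ = _ := by simp [abs_mul]
      rw [abs_div, abs_of_pos (by linarith : (0:ℝ) < 1 - a^2),
        div_le_iff₀ (by linarith : (0:ℝ) < 1 - a^2), hKval]
      have h2a : |2*a| ≤ 1 := by
        rw [abs_mul, abs_two]; nlinarith [ha.1, ha.2, abs_le.mpr ha]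
      have hχa : |χ - c^2*a^2| ≤ |χ| + c^2/4 := by
        have : |χ - c^2*a^2| ≤ |χ| + |c^2*a^2| := abs_sub _ _
        have h2 : |c^2*a^2| = c^2*a^2 := abs_of_nonneg (by positivity)
        nlinarith [sq_abs a, ha.1, ha.2, sq_nonneg a, abs_le.mpr ha]
      have habs : |χ - c^2*a^2| * |p.1 - q.1| ≤ (|χ| + c^2/4) * dist p q :=
        mul_le_mul hχa h1 (abs_nonneg _) (by positivity)
      have habs2 : |2*a| * |p.2 - q.2| ≤ 1 * dist p q :=
        mul_le_mul h2a h2 (abs_nonneg _) zero_le_one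
      have hdn : dist p q ≥ 0 := dist_nonneg
      nlinarith [key, habs, habs2, hd, sq_nonneg a, mul_le_mul_of_nonneg_left hd hdn]
  set F : ℝ → ℝ × ℝ := fun t => (ψ t, deriv ψ t) with hFdef
  have hF : ∀ t ∈ Ioo (-(2:ℝ)⁻¹) 2⁻¹,
      HasDerivAt F (v t (F t)) t ∧ F t ∈ (univ : Set (ℝ × ℝ)) := by
    intro t ht
    refine ⟨?_, trivial⟩
    have hpt : proj t = t := by
      rw [hprojdef]
      dsimp only
      rw [min_eq_left ht.2.le, max_eq_right ht.1.le]
    have h1 : HasDerivAt ψ (deriv ψ t) t := (han t).differentiableAt.hasDerivAt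
    have h2 : HasDerivAt (deriv ψ) (deriv (deriv ψ) t) t :=
      (hdan t trivial).differentiableAt.hasDerivAt
    have hne : (1:ℝ) - t^2 ≠ 0 := by
      have h := hden t
      rw [hpt] at h
      linarith
    have hval : v t (F t) = (deriv ψ t, deriv (deriv ψ) t) := by
      rw [hvdef, hFdef]
      dsimp only
      rw [hpt]
      refine Prod.ext rfl ?_
      dsimp only
      rw [div_eq_iff hne]
      have := hde t
      ring_nf
      ring_nf at this
      linarith
    rw [hval]
    exact h1.prodMk h2
  have hg : ∀ t ∈ Ioo (-(2:ℝ)⁻¹) 2⁻¹,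
      HasDerivAt (fun _ : ℝ => ((0,0) : ℝ × ℝ)) (v t ((fun _ : ℝ => ((0,0):ℝ×ℝ)) t)) t ∧
        ((0,0):ℝ×ℝ) ∈ (univ : Set (ℝ × ℝ)) := by
    intro t _
    refine ⟨?_, trivial⟩
    have : v t ((0,0):ℝ×ℝ) = ((0,0):ℝ×ℝ) := by
      rw [hvdef]; dsimp only; simp
    rw [this]
    exact hasDerivAt_const t _
  have heq0 : F 0 = (0,0) := by rw [hFdef]; exact Prod.ext h0 h0'
  have hmem : (0:ℝ) ∈ Ioo (-(2:ℝ)⁻¹) 2⁻¹ := by norm_num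
  have huniq := ODE_solution_unique_of_mem_Ioo (fun t _ => hv t) hmem hF hg heq0
  have hzero : ∀ t ∈ Ioo (-(2:ℝ)⁻¹) 2⁻¹, ψ t = 0 := by
    intro t ht
    have := huniq ht
    exact congrArg Prod.fst this
  have hev : ψ =ᶠ[nhds (0:ℝ)] 0 :=
    Filter.eventuallyEq_of_mem (Ioo_mem_nhds hmem.1 hmem.2) hzero
  have := hψan.eqOn_zero_of_preconnected_of_eventuallyEq_zero isPreconnected_univ
    (mem_univ (0:ℝ)) hev
  intro x
  exact this (mem_univ x)


end AuxLemmas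

theorem lambda_from_beta01
    (c : ℝ) (hc : 0 < c)
    (n : ℕ)
    (ψn : ℝ → ℝ) (lamn : ℂ) (χn : ℝ)
    (hnd : ProlateDatum c n ψn lamn χn)
    (β₀ β₁ : ℝ)
    (hβ₀ : β₀ = (1 / Real.sqrt 2) * ∫ x in (-1:ℝ)..1, ψn x)
    (hβ₁ : β₁ = Real.sqrt (3/2) * ∫ x in (-1:ℝ)..1, x * ψn x) :
    (Even n → ψn 0 ≠ 0 ∧ lamn = ((Real.sqrt 2 * β₀ / ψn 0 : ℝ) : ℂ)) ∧
    (Odd n → deriv ψn 0 ≠ 0 ∧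
      lamn = Complex.I * (c:ℂ) * ((Real.sqrt (2/3) : ℝ) : ℂ) * ((β₁ : ℝ) : ℂ) / (((deriv ψn 0 : ℝ)) : ℂ)) := by
  have hcont : Continuous ψn :=
    continuous_iff_continuousAt.mpr fun x => (hnd.analytic x).continuousAt
  -- key: can't have double zero at 0
  have hkey : ¬ (ψn 0 = 0 ∧ deriv ψn 0 = 0) := by
    rintro ⟨h0, h0'⟩
    have hz := aux_ode_zero c χn ψn hnd.analytic hnd.diff_eq h0 h0'
    have hno := hnd.normalized
    simp only [hz] at hno
    norm_num at hno
  -- conjugation relation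
  have hconj : ∀ x : ℝ, lamn * (ψn (-x) : ℂ) = (starRingEnd ℂ) lamn * (ψn x : ℂ) := by
    intro x
    have h1 := hnd.integral_eig (-x)
    have h2 := congrArg (starRingEnd ℂ) (hnd.integral_eig x)
    rw [map_mul, Complex.conj_ofReal] at h2
    have hcI : (starRingEnd ℂ)
        (∫ t in (-1:ℝ)..1, (ψn t : ℂ) * Complex.exp (Complex.I * (c:ℂ) * (x:ℂ) * (t:ℂ)))
        = ∫ t in (-1:ℝ)..1, (ψn t : ℂ) * Complex.exp (Complex.I * (c:ℂ) * ((-x:ℝ):ℂ) * (t:ℂ)) := by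
      rw [intervalIntegral.integral_of_le (by norm_num : (-1:ℝ) ≤ 1),
        intervalIntegral.integral_of_le (by norm_num : (-1:ℝ) ≤ 1), ← integral_conj]
      congr 1
      funext t
      rw [map_mul, Complex.conj_ofReal, ← Complex.exp_conj]
      congr 1
      simp only [map_mul, Complex.conj_I, Complex.conj_ofReal]
      push_cast
      ring
    rw [hcI] at h2
    exact h1.trans h2.symm
  -- a point where ψ doesn't vanish
  have hx0 : ∃ x : ℝ, ψn x ≠ 0 := by
    by_contra h
    push_neg at h
    have hno := hnd.normalized
    simp only [h] at hno
    norm_num at hno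
  obtain ⟨x₀, hx₀⟩ := hx0
  have hψx0C : (ψn x₀ : ℂ) ≠ 0 := by exact_mod_cast hx₀
  have hlamc : (starRingEnd ℂ) lamn ≠ 0 := by
    simpa using hnd.lam_ne_zero
  have hψnx0 : (ψn (-x₀) : ℂ) ≠ 0 := by
    intro h
    have he := hconj x₀
    rw [h, mul_zero] at he
    rcases mul_eq_zero.mp he.symm with h' | h'
    · exact hlamc h'
    · exact hψx0C h'
  have he1 := hconj x₀
  have he2 := hconj (-x₀)
  rw [neg_neg] at he2
  have hsq : lamn^2 = ((starRingEnd ℂ) lamn)^2 := by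
    have hmul : (lamn * (ψn (-x₀):ℂ)) * (lamn * (ψn x₀:ℂ))
        = ((starRingEnd ℂ) lamn * (ψn x₀:ℂ)) * ((starRingEnd ℂ) lamn * (ψn (-x₀):ℂ)) := by
      rw [he1, he2]
    have hmul2 : lamn^2 * ((ψn (-x₀):ℂ) * (ψn x₀:ℂ))
        = ((starRingEnd ℂ) lamn)^2 * ((ψn (-x₀):ℂ) * (ψn x₀:ℂ)) := by
      linear_combination hmul
    exact mul_right_cancel₀ (mul_ne_zero hψnx0 hψx0C) hmul2
  have hpar : (∀ x, ψn (-x) = ψn x) ∨ (∀ x, ψn (-x) = -ψn x) := by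
    have hfac : ((starRingEnd ℂ) lamn - lamn) * ((starRingEnd ℂ) lamn + lamn) = 0 := by
      linear_combination -hsq
    rcases mul_eq_zero.mp hfac with h | h
    · left
      intro x
      have he := hconj x
      rw [sub_eq_zero.mp h] at he
      have he' := mul_left_cancel₀ hnd.lam_ne_zero he
      exact_mod_cast he'
    · right
      intro x
      have he := hconj x
      rw [eq_neg_of_add_eq_zero_left h] at he
      have he'' : lamn * (ψn (-x):ℂ) = lamn * (-(ψn x):ℂ) := by
        rw [he]; push_cast; ring
      have he' := mul_left_cancel₀ hnd.lam_ne_zero he''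
      exact_mod_cast he'
  -- zero set facts
  have hSfin : {x : ℝ | x ∈ Set.Ioo (-1:ℝ) 1 ∧ ψn x = 0}.Finite := by
    rw [← Set.encard_ne_top_iff, hnd.zeros_card]
    simp
  have hSncard : {x : ℝ | x ∈ Set.Ioo (-1:ℝ) 1 ∧ ψn x = 0}.ncard = n := by
    rw [Set.ncard_def, hnd.zeros_card]
    simp
  have hSsym : ∀ x ∈ {x : ℝ | x ∈ Set.Ioo (-1:ℝ) 1 ∧ ψn x = 0},
      -x ∈ {x : ℝ | x ∈ Set.Ioo (-1:ℝ) 1 ∧ ψn x = 0} := by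
    rintro x ⟨hx, hx0⟩
    refine ⟨⟨by linarith [hx.2], by linarith [hx.1]⟩, ?_⟩
    rcases hpar with h | h
    · rw [h x, hx0]
    · rw [h x, hx0, neg_zero]
  have hiff : Even n ↔ (0:ℝ) ∉ {x : ℝ | x ∈ Set.Ioo (-1:ℝ) 1 ∧ ψn x = 0} := by
    rw [← hSncard]
    exact aux_even_ncard_iff hSfin hSsym
  -- dichotomy cases
  have heven_case : (∀ x, ψn (-x) = ψn x) → ψn 0 ≠ 0 ∧ Even n := by
    intro hE
    have hψ0 : ψn 0 ≠ 0 := by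
      intro h0
      apply hkey
      refine ⟨h0, ?_⟩
      have h1 : HasDerivAt ψn (deriv ψn 0) 0 := (hnd.analytic 0).differentiableAt.hasDerivAt
      have h2 : HasDerivAt (fun x => ψn (-x)) (deriv ψn 0 * (-1)) 0 := by
        have h1' : HasDerivAt ψn (deriv ψn 0) (-0 : ℝ) := by rw [neg_zero]; exact h1
        exact h1'.comp (0:ℝ) (hasDerivAt_neg (0:ℝ))
      have h3 : (fun x => ψn (-x)) = ψn := funext hE
      rw [h3] at h2
      have := h1.unique h2
      linarith
    refine ⟨hψ0, ?_⟩
    exact hiff.mpr (fun h => hψ0 h.2)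
  have hodd_case : (∀ x, ψn (-x) = -ψn x) →
      ψn 0 = 0 ∧ deriv ψn 0 ≠ 0 ∧ Odd n := by
    intro hO
    have h0 : ψn 0 = 0 := by
      have := hO 0
      rw [neg_zero] at this
      linarith
    have hd0 : deriv ψn 0 ≠ 0 := fun h => hkey ⟨h0, h⟩
    refine ⟨h0, hd0, ?_⟩
    rw [← Nat.not_even_iff_odd]
    intro he
    exact (hiff.mp he) ⟨by norm_num, h0⟩
  -- zeroth moment
  have hmom0 : lamn * (ψn 0 : ℂ) = ((∫ x in (-1:ℝ)..1, ψn x : ℝ) : ℂ) := by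
    have h := hnd.integral_eig 0
    rw [Complex.ofReal_zero] at h
    simp only [mul_zero, zero_mul, Complex.exp_zero, mul_one] at h
    rwa [intervalIntegral.integral_ofReal] at h
  -- first moment (derivative of the eigen-identity at 0)
  have hmom1 : lamn * ((deriv ψn 0 : ℝ) : ℂ)
      = Complex.I * (c:ℂ) * ((∫ x in (-1:ℝ)..1, x * ψn x : ℝ) : ℂ) := by
    obtain ⟨M, hM⟩ :=
      (isCompact_Icc : IsCompact (Icc (-1:ℝ) 1)).exists_bound_of_continuousOn hcont.continuousOn
    have hcontF : ∀ x : ℝ, Continuous fun t : ℝ =>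
        (ψn t : ℂ) * Complex.exp (Complex.I * (c:ℂ) * (x:ℂ) * (t:ℂ)) := by
      intro x
      apply Continuous.mul
      · exact Complex.continuous_ofReal.comp hcont
      · exact Complex.continuous_exp.comp (continuous_const.mul Complex.continuous_ofReal)
    have hcontF' : Continuous fun t : ℝ =>
        (ψn t : ℂ) * (Complex.I * (c:ℂ) * (t:ℂ) * Complex.exp (Complex.I * (c:ℂ) * ((0:ℝ):ℂ) * (t:ℂ))) := by
      apply Continuous.mul
      · exact Complex.continuous_ofReal.comp hcont
      · apply Continuous.mul
        · exact continuous_const.mul Complex.continuous_ofReal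
        · exact Complex.continuous_exp.comp (continuous_const.mul Complex.continuous_ofReal)
    have hder := intervalIntegral.hasDerivAt_integral_of_dominated_loc_of_deriv_le
      (F := fun (x : ℝ) (t : ℝ) => (ψn t : ℂ) * Complex.exp (Complex.I * (c:ℂ) * (x:ℂ) * (t:ℂ)))
      (F' := fun (x : ℝ) (t : ℝ) =>
        (ψn t : ℂ) * (Complex.I * (c:ℂ) * (t:ℂ) * Complex.exp (Complex.I * (c:ℂ) * (x:ℂ) * (t:ℂ))))
      (x₀ := (0:ℝ)) (a := (-1:ℝ)) (b := (1:ℝ)) (bound := fun _ => (|M| + 1) * c)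
      (μ := volume) (s := Metric.ball (0:ℝ) 1) (Metric.ball_mem_nhds (0:ℝ) zero_lt_one)
      (Filter.Eventually.of_forall fun x => (hcontF x).aestronglyMeasurable)
      ((hcontF 0).intervalIntegrable _ _)
      hcontF'.aestronglyMeasurable
      ?_ intervalIntegrable_const ?_
    · have hL : HasDerivAt (fun x : ℝ => lamn * (ψn x : ℂ)) (lamn * ((deriv ψn 0 : ℝ):ℂ)) 0 := by
        have h1 : HasDerivAt ψn (deriv ψn 0) 0 := (hnd.analytic 0).differentiableAt.hasDerivAt
        exact h1.ofReal_comp.const_mul lamn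
      have hfun : (fun x : ℝ => lamn * (ψn x : ℂ))
          = fun x : ℝ => ∫ t in (-1:ℝ)..1, (ψn t : ℂ) * Complex.exp (Complex.I * (c:ℂ) * (x:ℂ) * (t:ℂ)) := by
        funext x
        exact hnd.integral_eig x
      rw [hfun] at hL
      have huniq := hL.unique hder.2
      rw [huniq]
      have hval : ∀ t : ℝ,
          (ψn t : ℂ) * (Complex.I * (c:ℂ) * (t:ℂ) * Complex.exp (Complex.I * (c:ℂ) * ((0:ℝ):ℂ) * (t:ℂ)))
          = (Complex.I * (c:ℂ)) * ((t * ψn t : ℝ) : ℂ) := by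
        intro t
        rw [Complex.ofReal_zero]
        simp only [mul_zero, zero_mul, Complex.exp_zero, mul_one]
        push_cast
        ring
      calc (∫ t in (-1:ℝ)..1,
              (ψn t : ℂ) * (Complex.I * (c:ℂ) * (t:ℂ) * Complex.exp (Complex.I * (c:ℂ) * ((0:ℝ):ℂ) * (t:ℂ))))
          = ∫ t in (-1:ℝ)..1, (Complex.I * (c:ℂ)) * ((t * ψn t : ℝ) : ℂ) :=
            intervalIntegral.integral_congr (fun t _ => hval t)
        _ = (Complex.I * (c:ℂ)) * ∫ t in (-1:ℝ)..1, ((t * ψn t : ℝ) : ℂ) :=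
            intervalIntegral.integral_const_mul _ _
        _ = Complex.I * (c:ℂ) * ((∫ x in (-1:ℝ)..1, x * ψn x : ℝ) : ℂ) := by
            rw [intervalIntegral.integral_ofReal]
    · -- bound on derivative
      apply Filter.Eventually.of_forall
      intro t ht x _
      have htI : t ∈ Icc (-1:ℝ) 1 := by
        rw [uIoc_of_le (by norm_num : (-1:ℝ) ≤ 1)] at ht
        exact Ioc_subset_Icc_self ht
      have hψb : |ψn t| ≤ M := by
        have := hM t htI
        rwa [Real.norm_eq_abs] at this
      have hexp : ‖(Complex.exp (Complex.I * (c:ℂ) * (x:ℂ) * (t:ℂ)))‖ = 1 := by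
        have hrw : Complex.I * (c:ℂ) * (x:ℂ) * (t:ℂ) = ((c * x * t : ℝ) : ℂ) * Complex.I := by
          push_cast; ring
        rw [hrw, Complex.norm_exp_ofReal_mul_I]
      rw [norm_mul, norm_mul, norm_mul, norm_mul]
      simp only [Complex.norm_I, Complex.norm_real, Real.norm_eq_abs, hexp, mul_one, one_mul]
      have ht1 : |t| ≤ 1 := by
        rw [abs_le]; exact ⟨htI.1, htI.2⟩
      have h1 : |ψn t| ≤ |M| := le_trans hψb (le_abs_self M)
      have h2 : |c| = c := abs_of_pos hc
      rw [h2]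
      have hA : |ψn t| ≤ |M| + 1 := by linarith
      have hB : c * |t| ≤ c * 1 := by nlinarith
      calc |ψn t| * (c * |t|) ≤ (|M| + 1) * (c * 1) :=
            mul_le_mul hA hB (by positivity) (by positivity)
        _ = (|M| + 1) * c := by ring
    · -- differentiability in x
      apply Filter.Eventually.of_forall
      intro t _ x _
      have hin : HasDerivAt (fun y : ℂ => Complex.I * (c:ℂ) * y * (t:ℂ))
          (Complex.I * (c:ℂ) * 1 * (t:ℂ)) (x:ℂ) :=
        ((hasDerivAt_id (x:ℂ)).const_mul (Complex.I * (c:ℂ))).mul_const (t:ℂ)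
      have hexp := hin.cexp
      have hfull := (hexp.const_mul ((ψn t : ℂ))).comp_ofReal
      convert hfull using 1
      · rfl
      ring
  -- assemble
  constructor
  · intro hn
    rcases hpar with hE | hO
    · obtain ⟨hψ0, -⟩ := heven_case hE
      refine ⟨hψ0, ?_⟩
      have hsqrtb : Real.sqrt 2 * β₀ = ∫ x in (-1:ℝ)..1, ψn x := by
        rw [hβ₀]
        have h2 : Real.sqrt 2 ≠ 0 := by positivity
        field_simp
      rw [hsqrtb, Complex.ofReal_div,
        eq_div_iff (show ((ψn 0 : ℝ):ℂ) ≠ 0 by exact_mod_cast hψ0)]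
      exact hmom0
    · exact absurd (hodd_case hO).2.2 (Nat.not_odd_iff_even.mpr hn)
  · intro hn
    rcases hpar with hE | hO
    · exact absurd (heven_case hE).2 (Nat.not_even_iff_odd.mpr hn)
    · obtain ⟨h0, hd0, -⟩ := hodd_case hO
      refine ⟨hd0, ?_⟩
      have hsqrtb : Real.sqrt (2/3) * β₁ = ∫ x in (-1:ℝ)..1, x * ψn x := by
        rw [hβ₁, ← mul_assoc, ← Real.sqrt_mul (by norm_num : (0:ℝ) ≤ 2/3)]
        norm_num
      rw [eq_div_iff (show ((deriv ψn 0 : ℝ):ℂ) ≠ 0 by exact_mod_cast hd0), hmom1, ← hsqrtb]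
      push_cast
      ring
end
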